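/- Let X be uniformly distributed on {0,1}² and let F be a uniform balanced random predicate on {0,1}², independent of X. Then for every family {ρ_x}_{x∈{0,1}²} of density matrices on ℂ², d(F(X)|⟨ρ_X,F⟩) ≤ 1/(2√3). -/

import Mathlib

open Finset ComplexOrder

/-- The distance of a distribution `P` on a finite set `Z` from the uniform
distribution: `d(P) = (1/2) ∑_z |P z - 1/|Z||`. -/
noncomputable def distUnif {Z : Type*} [Fintype Z] (P : Z → ℝ) : ℝ :=
  (1 / 2) * ∑ z, |P z - 1 / (Fintype.card Z : ℝ)|

/-- For a joint distribution `P` on `W × Z` (given as `P : W → Z → ℝ`), the expected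
distance of `Z` from uniform given `W`: `d(Z|W) = ∑_w P_W(w) · d(P_{Z|W=w})`. -/
noncomputable def dCond {W Z : Type*} [Fintype W] [Fintype Z] (P : W → Z → ℝ) : ℝ :=
  ∑ w, (∑ z, P w z) * distUnif (fun z => P w z / ∑ z', P w z')

/-- A POVM on `ℂ^d` with an arbitrary finite outcome set: a family `{E_w}` of positive
semidefinite `d×d` complex matrices summing to the identity. -/
structure POVM (d : ℕ) where
  ι : Type
  [fin : Fintype ι]
  E : ι → Matrix (Fin d) (Fin d) ℂ
  psd : ∀ w, (E w).PosSemidef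
  sum_eq : ∑ w, E w = 1

attribute [instance] POVM.fin

/-- Given `X` with distribution `PX` on `𝒳`, a family `{ρ_x}` of density matrices on
`ℂ^d`, and a function `g : 𝒳 → 𝒵`, the distance of `g(X)` from uniform given `ρ_X`:
the supremum over all POVMs `{E_w}` (with arbitrary finite outcome sets) of
`d(g(X)|W)`, where `W` is the measurement outcome, with joint distribution
`P_{X W}(x,w) = PX x · tr(E_w ρ_x)`. -/
noncomputable def dQuant {d : ℕ} {𝒳 𝒵 : Type} [Fintype 𝒳] [Fintype 𝒵] [DecidableEq 𝒵]
    (PX : 𝒳 → ℝ) (ρ : 𝒳 → Matrix (Fin d) (Fin d) ℂ) (g : 𝒳 → 𝒵) : ℝ :=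
  sSup {r : ℝ | ∃ M : POVM d,
    r = dCond (fun (w : M.ι) (z : 𝒵) =>
      ∑ x ∈ univ.filter (fun x => g x = z), PX x * ((M.E w) * ρ x).trace.re)}

/-- The balanced predicates on `{0,1}²` (predicates taking each of the two values on
exactly half of the domain); `{0,1}` is identified with `Bool`. -/
def Bal : Finset ((Bool × Bool) → Bool) :=
  univ.filter (fun f =>
    (univ.filter (fun x => f x = false)).card = (univ.filter (fun x => f x = true)).card)

/-- The distribution of a uniform balanced random predicate on `{0,1}²`. -/
noncomputable def PF (f : (Bool × Bool) → Bool) : ℝ :=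
  if f ∈ Bal then (Bal.card : ℝ)⁻¹ else 0


/-!
For a predicate `g`, let `ρ_z = ∑_{g x = z} P_X(x) ρ_x` and `B = ρ_0 - ρ_1`. For every measurement
`d(g(X)|W) = ½ ∑_w |tr E_w B|`, and if `t ± B ≥ 0` this is at most `t·d/2`. A traceless
Hermitian `2 × 2` matrix satisfies `B² = λ²` with `λ² = tr B² / 2` (Cayley–Hamilton), so
`λ ± B ≥ 0` and `λ` bounds the distance.

The six balanced predicates on `{0,1}²` are the three nontrivial characters of `(ℤ/2)²` and their
negations; character orthogonality gives `∑_f (∑_x ±ρ_x)² = 8 ∑_x ρ_x² - 2 (∑_x ρ_x)²`.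
Since `tr ρ_x² ≤ 1` and `tr (∑_x ρ_x)² ≥ (tr ∑_x ρ_x)² / 2 = 8`, this yields `∑_f λ_f² ≤ 1/2`,
and Cauchy–Schwarz gives `∑_f λ_f ≤ √3`, i.e. an average of at most `√3/6 = 1/(2√3)`.
-/

open Matrix

namespace Matrix

section General

variable {n : Type*} [Fintype n]

lemma PosSemidef.re_trace_mul_nonneg [DecidableEq n] {A B : Matrix n n ℂ} (hA : A.PosSemidef)
    (hB : B.PosSemidef) : 0 ≤ (A * B).trace.re := by
  obtain ⟨S, rfl⟩ : ∃ S : Matrix n n ℂ, B = Sᴴ * S := by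
    open scoped MatrixOrder in
    exact CStarAlgebra.nonneg_iff_eq_star_mul_self.mp hB.nonneg
  rw [← mul_assoc, trace_mul_comm, ← mul_assoc]
  exact (Complex.nonneg_iff.mp (hA.mul_mul_conjTranspose_same S).trace_nonneg).1

lemma IsHermitian.ofReal_re_trace {A : Matrix n n ℂ} (hA : A.IsHermitian) :
    (A.trace.re : ℂ) = A.trace :=
  Complex.conj_eq_iff_re.mp (by rw [← Complex.star_def, ← trace_conjTranspose, hA.eq])

lemma IsHermitian.re_trace_mul_self_nonneg {A : Matrix n n ℂ}
    (hA : A.IsHermitian) : 0 ≤ (A * A).trace.re := by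
  simpa [hA.eq] using (Complex.nonneg_iff.mp (posSemidef_conjTranspose_mul_self A).trace_nonneg).1

lemma IsHermitian.re_trace_sq_le [DecidableEq n] {A : Matrix n n ℂ} (hA : A.IsHermitian) :
    A.trace.re ^ 2 ≤ Fintype.card n * (A * A).trace.re := by
  obtain ⟨τ, hτ⟩ : ∃ τ : ℝ, A.trace = τ := ⟨_, hA.ofReal_re_trace.symm⟩
  -- `tr (A - c)² ≥ 0` for every real `c`; the discriminant of this quadratic in `c` is `≤ 0`.
  have hquad : ∀ c : ℝ,
      0 ≤ (Fintype.card n : ℝ) * (c * c) + (-2 * τ) * c + (A * A).trace.re := by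
    intro c
    have hX : (A - c • 1).IsHermitian := hA.sub (isHermitian_one.smul (IsSelfAdjoint.all c))
    have h := hX.re_trace_mul_self_nonneg
    simp only [sub_mul, mul_sub, smul_mul_assoc, mul_smul_comm, one_mul, mul_one, trace_sub,
      trace_smul, trace_one, hτ, Complex.real_smul, Complex.sub_re, Complex.mul_re,
      Complex.ofReal_re, Complex.ofReal_im, Complex.natCast_re, Complex.natCast_im] at h
    linarith
  have := discrim_le_zero hquad
  rw [discrim] at this
  rw [hτ, Complex.ofReal_re]
  linarith

lemma IsHermitian.posSemidef_smul_one_add [DecidableEq n] {B : Matrix n n ℂ}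
    (hB : B.IsHermitian) {t : ℝ} (ht : 0 ≤ t) (hBB : B * B = (t ^ 2) • (1 : Matrix n n ℂ)) :
    (t • (1 : Matrix n n ℂ) + B).PosSemidef := by
  set X := t • (1 : Matrix n n ℂ) + B
  have hX : X.IsHermitian := (isHermitian_one.smul (IsSelfAdjoint.all t)).add hB
  -- `X² = 2t X`, so `X` is a nonnegative multiple of the positive semidefinite `Xᴴ X`.
  have hXX : Xᴴ * X = (2 * t) • X := by
    rw [hX.eq]
    simp only [X, add_mul, mul_add, smul_mul_assoc, mul_smul_comm, one_mul, mul_one, hBB]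
    module
  rcases ht.eq_or_lt with rfl | ht
  · have hB0 : B = 0 := conjTranspose_mul_self_eq_zero.mp (by simpa [hB.eq] using hBB)
    simpa [X, hB0] using PosSemidef.zero
  · have : X = (2 * t)⁻¹ • (Xᴴ * X) := by
      rw [hXX, smul_smul, inv_mul_cancel₀ (by positivity), one_smul]
    rw [this]
    exact (posSemidef_conjTranspose_mul_self X).smul (by positivity)

end General

theorem trace_mul_self_fin_two {R : Type*} [CommRing R] (A : Matrix (Fin 2) (Fin 2) R) :
    (A * A).trace = A.trace ^ 2 - 2 * A.det := by
  simp only [trace_fin_two, det_fin_two, mul_apply, Fin.sum_univ_two]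
  ring

theorem mul_self_eq_neg_det_smul_one_of_trace_eq_zero {R : Type*} [CommRing R] [Nontrivial R]
    {A : Matrix (Fin 2) (Fin 2) R} (h : A.trace = 0) : A * A = -A.det • (1 : Matrix _ _ R) := by
  have := A.aeval_self_charpoly
  rw [charpoly_fin_two, h] at this
  simp only [map_add, Polynomial.aeval_X_pow, Polynomial.aeval_C, map_zero, zero_mul, sub_zero,
    Algebra.algebraMap_eq_smul_one] at this
  rw [neg_smul, eq_neg_iff_add_eq_zero, ← sq]
  exact this

lemma IsHermitian.posSemidef_sqrt_smul_one_add_of_trace_eq_zero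
    {B : Matrix (Fin 2) (Fin 2) ℂ} (hB : B.IsHermitian) (h0 : B.trace = 0) :
    (√((B * B).trace.re / 2) • (1 : Matrix (Fin 2) (Fin 2) ℂ) + B).PosSemidef := by
  have hBB : (B * B).IsHermitian := by
    simpa [hB.eq] using isHermitian_conjTranspose_mul_self B
  have htr : (B * B).trace = -2 * B.det := by rw [trace_mul_self_fin_two, h0]; ring
  refine hB.posSemidef_smul_one_add (Real.sqrt_nonneg _) ?_
  rw [Real.sq_sqrt (div_nonneg hB.re_trace_mul_self_nonneg zero_le_two), ← Complex.coe_smul,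
    Complex.ofReal_div, hBB.ofReal_re_trace, htr,
    mul_self_eq_neg_det_smul_one_of_trace_eq_zero h0]
  congr 1
  push_cast
  ring

lemma PosSemidef.re_trace_mul_self_le_of_fin_two {A : Matrix (Fin 2) (Fin 2) ℂ}
    (hA : A.PosSemidef) : (A * A).trace.re ≤ A.trace.re ^ 2 := by
  obtain ⟨τ, hτ⟩ : ∃ τ : ℝ, A.trace = τ := ⟨_, hA.isHermitian.ofReal_re_trace.symm⟩
  have hdet := (Complex.nonneg_iff.mp hA.det_nonneg).1
  have hre : ((τ : ℂ) ^ 2 - 2 * A.det).re = τ ^ 2 - 2 * A.det.re := by simp [sq]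
  rw [trace_mul_self_fin_two, hτ, hre, Complex.ofReal_re]
  linarith

end Matrix

lemma sum_mul_distUnif_div_sum {Z : Type*} [Fintype Z] {q : Z → ℝ} (hq : ∀ z, 0 ≤ q z) :
    (∑ z, q z) * distUnif (fun z => q z / ∑ z', q z') =
      (1 / 2) * ∑ z, |q z - (∑ z', q z') / Fintype.card Z| := by
  rcases (sum_nonneg fun z _ => hq z : 0 ≤ ∑ z, q z).eq_or_lt with hs | hs
  · have hq0 : ∀ z, q z = 0 := fun z =>
      (sum_eq_zero_iff_of_nonneg fun z _ => hq z).mp hs.symm z (mem_univ z)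
    simp [hq0]
  · rw [distUnif, mul_left_comm, mul_sum]
    congr 1
    refine sum_congr rfl fun z _ => ?_
    rw [← abs_of_pos hs, ← abs_mul, abs_of_pos hs]
    congr 1
    field_simp

lemma dCond_bool {W : Type*} [Fintype W] {P : W → Bool → ℝ} (hP : ∀ w z, 0 ≤ P w z) :
    dCond P = ∑ w, |P w false - P w true| / 2 := by
  refine sum_congr rfl fun w _ => ?_
  rw [sum_mul_distUnif_div_sum (hP w)]
  simp only [Fintype.sum_bool, Fintype.card_bool]
  rw [show P w true - (P w true + P w false) / (2 : ℕ) = -((P w false - P w true) / 2) by ring,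
    show P w false - (P w true + P w false) / (2 : ℕ) = (P w false - P w true) / 2 by ring,
    abs_neg, abs_div, abs_two]
  ring

noncomputable def condState {d : ℕ} {𝒳 𝒵 : Type} [Fintype 𝒳] [DecidableEq 𝒵] (PX : 𝒳 → ℝ)
    (ρ : 𝒳 → Matrix (Fin d) (Fin d) ℂ) (g : 𝒳 → 𝒵) (z : 𝒵) : Matrix (Fin d) (Fin d) ℂ :=
  ∑ x ∈ univ.filter (fun x => g x = z), PX x • ρ x

noncomputable def biasOperator {d : ℕ} {𝒳 : Type} [Fintype 𝒳] (PX : 𝒳 → ℝ)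
    (ρ : 𝒳 → Matrix (Fin d) (Fin d) ℂ) (g : 𝒳 → Bool) : Matrix (Fin d) (Fin d) ℂ :=
  condState PX ρ g false - condState PX ρ g true

section Bias

variable {d : ℕ} {𝒳 : Type} [Fintype 𝒳]

lemma re_trace_mul_condState {𝒵 : Type} [DecidableEq 𝒵] (E : Matrix (Fin d) (Fin d) ℂ)
    (PX : 𝒳 → ℝ) (ρ : 𝒳 → Matrix (Fin d) (Fin d) ℂ) (g : 𝒳 → 𝒵) (z : 𝒵) :
    (E * condState PX ρ g z).trace.re =
      ∑ x ∈ univ.filter (fun x => g x = z), PX x * (E * ρ x).trace.re := by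
  simp [condState, mul_sum, trace_sum, Complex.re_sum, trace_smul]

lemma biasOperator_eq_sum (PX : 𝒳 → ℝ)
    (ρ : 𝒳 → Matrix (Fin d) (Fin d) ℂ) (g : 𝒳 → Bool) :
    biasOperator PX ρ g = ∑ x, PX x • (if g x then -ρ x else ρ x) := by
  rw [biasOperator, condState, condState, sum_filter, sum_filter, ← sum_sub_distrib]
  refine sum_congr rfl fun x _ => ?_
  cases g x <;> simp

lemma isHermitian_biasOperator (PX : 𝒳 → ℝ) {ρ : 𝒳 → Matrix (Fin d) (Fin d) ℂ}
    (hρ : ∀ x, (ρ x).IsHermitian) (g : 𝒳 → Bool) : (biasOperator PX ρ g).IsHermitian := by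
  have h : ∀ z, (condState PX ρ g z).IsHermitian := fun z =>
    isSelfAdjoint_sum _ fun x _ => (hρ x).smul (IsSelfAdjoint.all (PX x))
  exact (h false).sub (h true)

lemma POVM.sum_abs_re_trace_mul_le (M : POVM d) {B : Matrix (Fin d) (Fin d) ℂ} {t : ℝ}
    (hadd : (t • (1 : Matrix (Fin d) (Fin d) ℂ) + B).PosSemidef)
    (hsub : (t • (1 : Matrix (Fin d) (Fin d) ℂ) - B).PosSemidef) :
    ∑ w, |(M.E w * B).trace.re| ≤ t * d := by
  have key : ∀ w, |(M.E w * B).trace.re| ≤ t * (M.E w).trace.re := fun w => by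
    have h₁ := (M.psd w).re_trace_mul_nonneg hadd
    have h₂ := (M.psd w).re_trace_mul_nonneg hsub
    simp only [mul_add, mul_sub, mul_smul_comm, mul_one, trace_add, trace_sub, trace_smul,
      Complex.add_re, Complex.sub_re, Complex.real_smul, Complex.re_ofReal_mul] at h₁ h₂
    exact abs_le.mpr ⟨by linarith, by linarith⟩
  calc ∑ w, |(M.E w * B).trace.re| ≤ ∑ w, t * (M.E w).trace.re := sum_le_sum fun w _ => key w
    _ = t * d := by simp [← mul_sum, ← Complex.re_sum, ← trace_sum, M.sum_eq]

lemma dQuant_le_of_posSemidef {PX : 𝒳 → ℝ} (hPX : ∀ x, 0 ≤ PX x)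
    {ρ : 𝒳 → Matrix (Fin d) (Fin d) ℂ} (hρ : ∀ x, (ρ x).PosSemidef) (g : 𝒳 → Bool) {t : ℝ}
    (hadd : (t • (1 : Matrix (Fin d) (Fin d) ℂ) + biasOperator PX ρ g).PosSemidef)
    (hsub : (t • (1 : Matrix (Fin d) (Fin d) ℂ) - biasOperator PX ρ g).PosSemidef) :
    dQuant PX ρ g ≤ t * d / 2 := by
  have ht : 0 ≤ t * d := by
    have := (Complex.nonneg_iff.mp (hadd.add hsub).trace_nonneg).1
    simp only [add_add_sub_cancel, trace_add, trace_smul, trace_one, Fintype.card_fin,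
      Complex.add_re, Complex.real_smul, Complex.re_ofReal_mul, Complex.natCast_re] at this
    linarith
  refine Real.sSup_le ?_ (by positivity)
  rintro r ⟨M, rfl⟩
  rw [dCond_bool fun w z => sum_nonneg fun x _ =>
    mul_nonneg (hPX x) ((M.psd w).re_trace_mul_nonneg (hρ x)), ← sum_div]
  simp only [← re_trace_mul_condState, ← Complex.sub_re, ← trace_sub, ← mul_sub]
  exact div_le_div_of_nonneg_right (M.sum_abs_re_trace_mul_le hadd hsub) zero_le_two

lemma dQuant_le_sqrt_of_fin_two {PX : 𝒳 → ℝ} (hPX : ∀ x, 0 ≤ PX x)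
    {ρ : 𝒳 → Matrix (Fin 2) (Fin 2) ℂ} (hρ : ∀ x, (ρ x).PosSemidef) (g : 𝒳 → Bool)
    (h0 : (biasOperator PX ρ g).trace = 0) :
    dQuant PX ρ g ≤ √((biasOperator PX ρ g * biasOperator PX ρ g).trace.re / 2) := by
  have hB := isHermitian_biasOperator PX (fun x => (hρ x).isHermitian) g
  have hadd := hB.posSemidef_sqrt_smul_one_add_of_trace_eq_zero h0
  have hsub :=
    hB.neg.posSemidef_sqrt_smul_one_add_of_trace_eq_zero (by rw [trace_neg, h0, neg_zero])
  rw [neg_mul_neg, ← sub_eq_add_neg] at hsub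
  simpa using dQuant_le_of_posSemidef hPX hρ g hadd hsub

end Bias

lemma Bal_eq : Bal = {fun x => x.1, fun x => !x.1, fun x => x.2, fun x => !x.2,
    fun x => xor x.1 x.2, fun x => !xor x.1 x.2} := by
  decide

lemma card_Bal : Bal.card = 6 := by
  rw [Bal_eq]; decide

lemma sum_Bal_sq_signedSum {R : Type*} [Ring R] (a : Bool × Bool → R) :
    ∑ f ∈ Bal, (∑ x, if f x then -a x else a x) ^ 2 = 8 • ∑ x, a x ^ 2 - 2 • (∑ x, a x) ^ 2 := by
  rw [Bal_eq, sum_insert (by decide), sum_insert (by decide), sum_insert (by decide),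
    sum_insert (by decide), sum_insert (by decide), sum_singleton]
  simp only [Fintype.sum_prod_type, Fintype.sum_bool, Bool.not_true, Bool.not_false,
    Bool.xor_true, Bool.xor_false, if_true, if_false, Bool.false_eq_true]
  noncomm_ring

lemma sum_PF_mul (φ : ((Bool × Bool) → Bool) → ℝ) :
    ∑ f, PF f * φ f = (∑ f ∈ Bal, φ f) / 6 := by
  simp [PF, card_Bal, ite_mul, sum_ite_mem, div_eq_inv_mul, mul_sum]

lemma trace_biasOperator_eq_zero_of_mem_Bal (c : ℝ) {ρ : Bool × Bool → Matrix (Fin 2) (Fin 2) ℂ}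
    (hρt : ∀ x, (ρ x).trace = 1) {f : (Bool × Bool) → Bool} (hf : f ∈ Bal) :
    (biasOperator (fun _ => c) ρ f).trace = 0 := by
  have hcard := (mem_filter.mp hf).2
  simp [biasOperator, condState, trace_sum, trace_smul, hρt, hcard]

lemma sum_Bal_re_trace_biasOperator_sq_le (c : ℝ) {ρ : Bool × Bool → Matrix (Fin 2) (Fin 2) ℂ}
    (hρ : ∀ x, (ρ x).PosSemidef) (hρt : ∀ x, (ρ x).trace = 1) :
    ∑ f ∈ Bal, (biasOperator (fun _ => c) ρ f * biasOperator (fun _ => c) ρ f).trace.re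
      ≤ 16 * c ^ 2 := by
  have hsq : ∑ x, (ρ x ^ 2).trace.re ≤ 4 := by
    refine (sum_le_sum fun x _ => ?_).trans_eq (by simp : ∑ _x : Bool × Bool, (1 : ℝ) = 4)
    simpa [sq, hρt x] using (hρ x).re_trace_mul_self_le_of_fin_two
  have hS : 8 ≤ ((∑ x, ρ x) ^ 2).trace.re := by
    have hherm : (∑ x, ρ x).IsHermitian := isSelfAdjoint_sum univ fun x _ => (hρ x).isHermitian
    have htr : (∑ x, ρ x).trace.re = 4 := by simp [trace_sum, hρt]
    have := hherm.re_trace_sq_le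
    rw [htr, Fintype.card_fin, Nat.cast_ofNat] at this
    rw [sq]
    linarith
  have hB : ∀ f, biasOperator (fun _ => c) ρ f * biasOperator (fun _ => c) ρ f =
      c ^ 2 • (∑ x, if f x then -ρ x else ρ x) ^ 2 := fun f => by
    rw [biasOperator_eq_sum, ← smul_sum, smul_mul_smul_comm, sq, sq]
  calc ∑ f ∈ Bal, (biasOperator (fun _ => c) ρ f * biasOperator (fun _ => c) ρ f).trace.re
      = c ^ 2 * (8 * ∑ x, (ρ x ^ 2).trace.re - 2 * ((∑ x, ρ x) ^ 2).trace.re) := by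
        simp only [hB, trace_smul, Complex.real_smul, Complex.re_ofReal_mul, ← mul_sum,
          ← Complex.re_sum, ← trace_sum, sum_Bal_sq_signedSum]
        rw [trace_sub, trace_smul, trace_smul, trace_sum]
        simp
    _ ≤ c ^ 2 * (8 * 4 - 2 * 8) := by gcongr
    _ = 16 * c ^ 2 := by ring

/-- **Second part of Lemma `lem:compex`** (quantum upper bound): let `X` be uniform on
`{0,1}²` and `F` a uniform balanced random predicate on `{0,1}²` independent of `X`.
For every family `{ρ_x}` of density matrices on `ℂ²`,
`d(F(X)|⟨ρ_X,F⟩) ≤ 1/(2√3)`. -/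
theorem lemma_compex_quantum (ρ : (Bool × Bool) → Matrix (Fin 2) (Fin 2) ℂ)
    (hρ : ∀ x, (ρ x).PosSemidef) (hρt : ∀ x, (ρ x).trace = 1) :
    ∑ f, PF f * dQuant (fun _ => (1 / 4 : ℝ)) ρ f ≤ 1 / (2 * Real.sqrt 3) := by
  set a : ((Bool × Bool) → Bool) → ℝ := fun f =>
    (biasOperator (fun _ => (1 / 4 : ℝ)) ρ f * biasOperator (fun _ => 1 / 4) ρ f).trace.re
  have hbound : ∀ f ∈ Bal, dQuant (fun _ => (1 / 4 : ℝ)) ρ f ≤ √(a f / 2) := fun f hf =>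
    dQuant_le_sqrt_of_fin_two (fun _ => by norm_num) hρ f
      (trace_biasOperator_eq_zero_of_mem_Bal _ hρt hf)
  have ha : ∑ f ∈ Bal, a f ≤ 1 :=
    (sum_Bal_re_trace_biasOperator_sq_le (1 / 4) hρ hρt).trans_eq (by norm_num)
  have ha0 : ∀ f, 0 ≤ a f := fun f =>
    (isHermitian_biasOperator _ (fun x => (hρ x).isHermitian) f).re_trace_mul_self_nonneg
  have hsum : ∑ f ∈ Bal, √(a f / 2) ≤ √3 := by
    refine Real.le_sqrt_of_sq_le ?_
    calc (∑ f ∈ Bal, √(a f / 2)) ^ 2 ≤ Bal.card * ∑ f ∈ Bal, √(a f / 2) ^ 2 :=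
          sq_sum_le_card_mul_sum_sq
      _ = 6 * ((∑ f ∈ Bal, a f) / 2) := by
          rw [card_Bal, sum_div]
          simp only [fun f => Real.sq_sqrt (div_nonneg (ha0 f) zero_le_two)]
          norm_num
      _ ≤ 3 := by linarith
  calc ∑ f, PF f * dQuant (fun _ => (1 / 4 : ℝ)) ρ f
      = (∑ f ∈ Bal, dQuant (fun _ => (1 / 4 : ℝ)) ρ f) / 6 := sum_PF_mul _
    _ ≤ √3 / 6 := by gcongr; exact (sum_le_sum hbound).trans hsum
    _ = 1 / (2 * √3) := by
        field_simp
        norm_num
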